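/- Let $1 \leq m < n$ and $k \geq 1$ be integers, $0 \leq \alpha \leq 1$, $A \subseteq \mathbb{R}^m$, $a \in \mathbb{R}^m$ and $f : A \to \mathbb{R}^{n-m}$. Then $f$ is approximately differentiable of order $(k,\alpha)$ at $a$ if and only if there exists a function $g : \mathbb{R}^m \to \mathbb{R}^{n-m}$ pointwise differentiable of order $(k,\alpha)$ at $a$ such that $f(a) = g(a)$ if $a \in A$ and the set $\{x : g(x) = f(x)\}$ has Lebesgue density $1$ at $a$ (i.e. the complement of $\{x \in A : g(x) = f(x)\}$ has $m$-dimensional Lebesgue density $0$ at $a$). -/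

import Mathlib

open MeasureTheory Metric Filter Set
open scoped ENNReal Topology NNReal

/-- The set `S` has `m`-dimensional Lebesgue density `0` at `a`. -/
def DensityZero {m : ℕ} (S : Set (EuclideanSpace ℝ (Fin m)))
    (a : EuclideanSpace ℝ (Fin m)) : Prop :=
  Filter.Tendsto (fun r : ℝ =>
    volume (S ∩ Metric.closedBall a r) / volume (Metric.closedBall a r))
    (𝓝[>] (0 : ℝ)) (𝓝 0)

/-- `P` is a polynomial function of degree at most `k`. -/
def PolyDegLE {E F : Type*} [NormedAddCommGroup E] [NormedSpace ℝ E]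
    [NormedAddCommGroup F] [NormedSpace ℝ F] (k : ℕ) (P : E → F) : Prop :=
  ∃ φ : ∀ i : ℕ, ContinuousMultilinearMap ℝ (fun _ : Fin i => E) F,
    ∀ x, P x = ∑ i ∈ Finset.range (k + 1), φ i (fun _ => x)

/-- `f : A → F` is approximately differentiable of order `(k, α)` at `a`. -/
def ApproxDiffAt {m : ℕ} {F : Type*} [NormedAddCommGroup F] [NormedSpace ℝ F]
    (k : ℕ) (α : ℝ) (A : Set (EuclideanSpace ℝ (Fin m)))
    (f : EuclideanSpace ℝ (Fin m) → F) (a : EuclideanSpace ℝ (Fin m)) : Prop :=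
  DensityZero Aᶜ a ∧
  ∃ P : EuclideanSpace ℝ (Fin m) → F, PolyDegLE k P ∧ (a ∈ A → P a = f a) ∧
    (α = 0 → ∀ ε : ℝ, 0 < ε →
      DensityZero {x | x ∈ A ∧ ε * ‖x - a‖ ^ (k : ℝ) < ‖f x - P x‖} a) ∧
    (α ≠ 0 → ∃ lam : ℝ, 0 ≤ lam ∧
      DensityZero {x | x ∈ A ∧ lam * ‖x - a‖ ^ ((k : ℝ) + α) < ‖f x - P x‖} a)

/-- `g` is pointwise differentiable of order `(k, α)` at `a`. -/
def PtDiffAt {m : ℕ} {F : Type*} [NormedAddCommGroup F] [NormedSpace ℝ F]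
    (k : ℕ) (α : ℝ) (g : EuclideanSpace ℝ (Fin m) → F)
    (a : EuclideanSpace ℝ (Fin m)) : Prop :=
  ∃ P : EuclideanSpace ℝ (Fin m) → F, PolyDegLE k P ∧ g a = P a ∧
    (α = 0 → ∀ ε : ℝ, 0 < ε → ∀ᶠ x in 𝓝 a, ‖g x - P x‖ ≤ ε * ‖x - a‖ ^ (k : ℝ)) ∧
    (α ≠ 0 → ∃ C : ℝ, ∀ᶠ x in 𝓝 a, ‖g x - P x‖ ≤ C * ‖x - a‖ ^ ((k : ℝ) + α))

/-!
Given the polynomial `P` of the approximate expansion of `f`, the bad sets where `f` leaves the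
allowed error bounds have density zero. A diagonal argument cuts the `j`-th bad set down to a
ball of radius `r j` so that their union still has density zero; then `g`, equal to `f` where every
bound holds inside the corresponding ball and to `P` elsewhere, satisfies the bounds on a
neighbourhood of `a` and agrees with `f` on a set of density one. Conversely, where `g = f` the
pointwise bounds of `g` are bounds for `f`, so the bad sets of `f` sit in the density-zero set
`{g ≠ f}` near `a`.
-/

lemma measure_union_inter_div_le {X : Type*} [MeasurableSpace X] (μ : Measure X)
    (S T B : Set X) (c : ℝ≥0∞) :
    μ ((S ∪ T) ∩ B) / c ≤ μ (S ∩ B) / c + μ (T ∩ B) / c := by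
  rw [← ENNReal.add_div, union_inter_distrib_right]
  gcongr
  exact measure_union_le _ _

lemma measure_iUnion_inter_closedBall_le {X : Type*} [PseudoMetricSpace X]
    [MeasurableSpace X] (μ : Measure X) {a : X} {S : ℕ → Set X} {r : ℕ → ℝ}
    {c : ℕ → ℝ≥0∞} (hr : ∀ j, 0 < r j)
    (hS : ∀ j, ∀ s ∈ Ioc 0 (r j), μ (S j ∩ closedBall a s) ≤ c j * μ (closedBall a s))
    {ρ : ℝ} (hρ : 0 < ρ) :
    μ ((⋃ j, S j ∩ closedBall a (r j)) ∩ closedBall a ρ) ≤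
      (∑' j, c j) * μ (closedBall a ρ) := by
  rw [iUnion_inter, ← ENNReal.tsum_mul_right]
  refine (measure_iUnion_le _).trans (ENNReal.tsum_le_tsum fun j => ?_)
  calc μ (S j ∩ closedBall a (r j) ∩ closedBall a ρ)
      ≤ μ (S j ∩ closedBall a (min (r j) ρ)) :=
        measure_mono fun x hx => ⟨hx.1.1, mem_closedBall.mpr (le_min hx.1.2 hx.2)⟩
    _ ≤ c j * μ (closedBall a (min (r j) ρ)) :=
        hS j _ ⟨lt_min (hr j) hρ, min_le_left _ _⟩
    _ ≤ c j * μ (closedBall a ρ) := by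
        gcongr
        exact min_le_right _ _

namespace DensityZero

variable {m : ℕ} {a : EuclideanSpace ℝ (Fin m)} {S T : Set (EuclideanSpace ℝ (Fin m))}

lemma empty : DensityZero ∅ a := by
  simp only [DensityZero, empty_inter, measure_empty, ENNReal.zero_div]
  exact tendsto_const_nhds

lemma mono_eventually (hT : DensityZero T a) (h : ∀ᶠ x in 𝓝 a, x ∈ S → x ∈ T) :
    DensityZero S a := by
  obtain ⟨ε, hε, hball⟩ := eventually_nhds_iff_ball.mp h
  refine tendsto_of_tendsto_of_tendsto_of_le_of_le' tendsto_const_nhds hT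
    (Eventually.of_forall fun r => zero_le) ?_
  filter_upwards [Ioo_mem_nhdsGT hε] with r hr
  refine ENNReal.div_le_div_right (measure_mono ?_) _
  rintro x ⟨hxS, hxB⟩
  exact ⟨hball x ((mem_closedBall.mp hxB).trans_lt hr.2) hxS, hxB⟩

lemma mono (hT : DensityZero T a) (h : S ⊆ T) : DensityZero S a :=
  hT.mono_eventually (Eventually.of_forall h)

lemma union (hS : DensityZero S a) (hT : DensityZero T a) : DensityZero (S ∪ T) a := by
  refine tendsto_of_tendsto_of_tendsto_of_le_of_le' tendsto_const_nhds
    (by simpa using hS.add hT) (Eventually.of_forall fun r => zero_le)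
    (Eventually.of_forall fun r => measure_union_inter_div_le volume S T _ _)

lemma biUnion_finset {ι : Type*} (s : Finset ι) {S : ι → Set (EuclideanSpace ℝ (Fin m))}
    (hS : ∀ i ∈ s, DensityZero (S i) a) : DensityZero (⋃ i ∈ s, S i) a := by
  classical
  induction s using Finset.induction_on with
  | empty => simpa using empty
  | insert i s _ ih =>
    rw [Finset.set_biUnion_insert]
    exact (hS i (Finset.mem_insert_self i s)).union
      (ih fun j hj => hS j (Finset.mem_insert_of_mem hj))

lemma eventually_volume_inter_closedBall_le (hS : DensityZero S a) {c : ℝ≥0∞} (hc : 0 < c) :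
    ∀ᶠ s in 𝓝[>] 0, volume (S ∩ closedBall a s) ≤ c * volume (closedBall a s) := by
  filter_upwards [hS.eventually_le_const hc, self_mem_nhdsWithin] with s hs hs0
  exact (ENNReal.div_le_iff (measure_closedBall_pos volume a hs0).ne'
    measure_closedBall_lt_top.ne).mp hs

/-- Countable unions of density-zero sets need not have density zero, but they do once each
set is cut down to a small enough ball around `a`. -/
lemma exists_iUnion_inter_closedBall {S : ℕ → Set (EuclideanSpace ℝ (Fin m))}
    (hS : ∀ j, DensityZero (S j) a) :
    ∃ r : ℕ → ℝ, (∀ j, 0 < r j) ∧ DensityZero (⋃ j, S j ∩ closedBall a (r j)) a := by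
  set c : ℕ → ℝ≥0∞ := fun j => 2⁻¹ ^ j
  have hc : ∀ j, 0 < c j := fun j => ENNReal.pow_pos (by norm_num) j
  choose r hr hrS using fun j => mem_nhdsGT_iff_exists_Ioc_subset.mp
    ((hS j).eventually_volume_inter_closedBall_le (hc j))
  refine ⟨r, hr, ENNReal.tendsto_nhds_zero.mpr fun ε hε => ?_⟩
  have hε2 : 0 < ε / 2 := ENNReal.half_pos hε.ne'
  obtain ⟨J, hJ⟩ := ((ENNReal.tendsto_sum_nat_add c (by
    simp [c, ENNReal.tsum_geometric, ENNReal.one_sub_inv_two])).eventually_le_const hε2).exists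
  set H := ⋃ j ∈ Finset.range J, S j
  set U := ⋃ j, S (j + J) ∩ closedBall a (r (j + J))
  have hsplit : (⋃ j, S j ∩ closedBall a (r j)) ⊆ H ∪ U := by
    refine iUnion_subset fun j x hx => ?_
    rcases lt_or_ge j J with hj | hj
    · exact Or.inl (mem_biUnion (Finset.mem_range.mpr hj) hx.1)
    · refine Or.inr (mem_iUnion.mpr ⟨j - J, ?_⟩)
      rwa [Nat.sub_add_cancel hj]
  have hH : DensityZero H a := biUnion_finset _ fun j _ => hS j
  filter_upwards [hH.eventually_le_const hε2, self_mem_nhdsWithin] with ρ hρH hρ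
  have hρU : volume (U ∩ closedBall a ρ) / volume (closedBall a ρ) ≤ ε / 2 :=
    ENNReal.div_le_of_le_mul <| (measure_iUnion_inter_closedBall_le volume
      (fun j => hr (j + J)) (fun j => hrS (j + J)) hρ).trans (by gcongr)
  calc volume ((⋃ j, S j ∩ closedBall a (r j)) ∩ closedBall a ρ) / volume (closedBall a ρ)
      ≤ volume ((H ∪ U) ∩ closedBall a ρ) / volume (closedBall a ρ) := by gcongr
    _ ≤ ε / 2 + ε / 2 := (measure_union_inter_div_le _ _ _ _ _).trans (add_le_add hρH hρU)
    _ = ε := ENNReal.add_halves ε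

end DensityZero

section Modification

variable {m : ℕ} {F : Type*} [NormedAddCommGroup F] {a : EuclideanSpace ℝ (Fin m)}
  {A : Set (EuclideanSpace ℝ (Fin m))} {f g P : EuclideanSpace ℝ (Fin m) → F}
  {w : EuclideanSpace ℝ (Fin m) → ℝ}

lemma exists_eventually_norm_sub_le_of_densityZero {c : ℕ → ℝ} (hc : ∀ j, 0 ≤ c j)
    (hw : ∀ x, 0 ≤ w x) (hA : DensityZero Aᶜ a) (hPa : a ∈ A → P a = f a)
    (hbad : ∀ j, DensityZero {x | x ∈ A ∧ c j * w x < ‖f x - P x‖} a) :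
    ∃ g : EuclideanSpace ℝ (Fin m) → F, g a = P a ∧ (a ∈ A → f a = g a) ∧
      (∀ j, ∀ᶠ x in 𝓝 a, ‖g x - P x‖ ≤ c j * w x) ∧
      DensityZero {x | x ∈ A ∧ g x = f x}ᶜ a := by
  classical
  obtain ⟨r, hr, hU⟩ := DensityZero.exists_iUnion_inter_closedBall hbad
  set G := {x | x ∈ A ∧ ∀ j, x ∈ closedBall a (r j) → ‖f x - P x‖ ≤ c j * w x}
  have haG : a ∈ A → a ∈ G := fun ha =>
    ⟨ha, fun j _ => by rw [hPa ha, sub_self, norm_zero]; exact mul_nonneg (hc j) (hw a)⟩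
  refine ⟨G.piecewise f P, ?_, fun ha => (piecewise_eq_of_mem _ _ _ (haG ha)).symm,
    fun j => ?_, ?_⟩
  · by_cases ha : a ∈ A
    · rw [piecewise_eq_of_mem _ _ _ (haG ha), hPa ha]
    · exact piecewise_eq_of_notMem _ _ _ fun h => ha h.1
  · filter_upwards [closedBall_mem_nhds a (hr j)] with x hx
    by_cases hxG : x ∈ G
    · rw [piecewise_eq_of_mem _ _ _ hxG]
      exact hxG.2 j hx
    · rw [piecewise_eq_of_notMem _ _ _ hxG, sub_self, norm_zero]
      exact mul_nonneg (hc j) (hw x)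
  · refine (hA.union hU).mono fun x hx => ?_
    by_cases hxA : x ∈ A
    · have hxG : x ∉ G := fun hxG => hx ⟨hxA, piecewise_eq_of_mem _ _ _ hxG⟩
      simp only [G, mem_ofPred_eq, not_and, not_forall, not_le] at hxG
      obtain ⟨j, hxB, hxbad⟩ := hxG hxA
      exact Or.inr (mem_iUnion.mpr ⟨j, ⟨hxA, hxbad⟩, hxB⟩)
    · exact Or.inl hxA

lemma densityZero_lt_norm_sub_of_eventually_le (hE : DensityZero {x | x ∈ A ∧ g x = f x}ᶜ a)
    {c : ℝ} (hg : ∀ᶠ x in 𝓝 a, ‖g x - P x‖ ≤ c * w x) :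
    DensityZero {x | x ∈ A ∧ c * w x < ‖f x - P x‖} a :=
  hE.mono_eventually <| hg.mono fun x hx hbad heq => by
    rw [heq.2] at hx
    exact hbad.2.not_ge hx

end Modification

theorem stmt1_general {m n k : ℕ}
    (α : ℝ)
    (A : Set (EuclideanSpace ℝ (Fin m))) (a : EuclideanSpace ℝ (Fin m))
    (f : EuclideanSpace ℝ (Fin m) → EuclideanSpace ℝ (Fin (n - m))) :
    ApproxDiffAt k α A f a ↔
      ∃ g : EuclideanSpace ℝ (Fin m) → EuclideanSpace ℝ (Fin (n - m)),
        PtDiffAt k α g a ∧ (a ∈ A → f a = g a) ∧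
        DensityZero {x | x ∈ A ∧ g x = f x}ᶜ a := by
  have hw : ∀ (p : ℝ) (x : EuclideanSpace ℝ (Fin m)), 0 ≤ ‖x - a‖ ^ p :=
    fun p x => Real.rpow_nonneg (norm_nonneg _) p
  constructor
  · rintro ⟨hA, P, hP, hPa, h0, h1⟩
    by_cases hα : α = 0
    · obtain ⟨g, hga, hfg, hgP, hE⟩ := exists_eventually_norm_sub_le_of_densityZero
        (c := fun j : ℕ => 1 / ((j : ℝ) + 1)) (fun j => by positivity) (hw k) hA hPa
        fun j => h0 hα _ (by positivity)
      refine ⟨g, ⟨P, hP, hga, fun _ ε hε => ?_, fun h => (h hα).elim⟩, hfg, hE⟩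
      obtain ⟨j, hj⟩ := exists_nat_one_div_lt hε
      filter_upwards [hgP j] with x hx
      exact hx.trans (by gcongr)
    · obtain ⟨lam, hlam, hbad⟩ := h1 hα
      obtain ⟨g, hga, hfg, hgP, hE⟩ := exists_eventually_norm_sub_le_of_densityZero
        (c := fun _ => lam) (fun _ => hlam) (hw _) hA hPa fun _ => hbad
      exact ⟨g, ⟨P, hP, hga, fun h => (hα h).elim, fun _ => ⟨lam, hgP 0⟩⟩, hfg, hE⟩
  · rintro ⟨g, ⟨P, hP, hgP, h0, h1⟩, hfg, hE⟩
    refine ⟨hE.mono fun x hxA hx => hxA hx.1, P, hP, fun ha => ((hfg ha).trans hgP).symm,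
      fun hα ε hε => densityZero_lt_norm_sub_of_eventually_le hE (h0 hα ε hε), fun hα => ?_⟩
    obtain ⟨C, hC⟩ := h1 hα
    refine ⟨max C 0, le_max_right C 0, densityZero_lt_norm_sub_of_eventually_le hE ?_⟩
    filter_upwards [hC] with x hx
    exact hx.trans (by gcongr; exact le_max_left C 0)

theorem stmt1 {m n k : ℕ} (hm : 1 ≤ m) (hmn : m < n) (hk : 1 ≤ k)
    (α : ℝ) (hα0 : 0 ≤ α) (hα1 : α ≤ 1)
    (A : Set (EuclideanSpace ℝ (Fin m))) (a : EuclideanSpace ℝ (Fin m))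
    (f : EuclideanSpace ℝ (Fin m) → EuclideanSpace ℝ (Fin (n - m))) :
    ApproxDiffAt k α A f a ↔
      ∃ g : EuclideanSpace ℝ (Fin m) → EuclideanSpace ℝ (Fin (n - m)),
        PtDiffAt k α g a ∧ (a ∈ A → f a = g a) ∧
        DensityZero {x | x ∈ A ∧ g x = f x}ᶜ a :=
  stmt1_general α A a f
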